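/- Let h22 = (0,0,0,12,14,15+24) with nonzero brackets [e1,e2]=e4, [e1,e4]=e5, [e1,e5]=e6, [e2,e4]=e6, equipped with the inner product making e1,...,e6 orthonormal. Then the left-invariant vector e3 lies in the symmetry subspace: g([X,e3],Z) + g([X,Z],e3) + g([e3,Z],X) = 0 for all X, Z ∈ h22, and moreover the symmetry subspace equals R·e3, which is properly contained in the center Z(h22) = span(e3, e6). -/
import Mathlib


open Submodule

abbrev V6 : Type := Fin 6 → ℝ

def e (i : Fin 6) : V6 := Pi.single i 1

/-- Bracket of h22 = (0,0,0,12,14,15+24): [e1,e2]=e4, [e1,e4]=e5, [e1,e5]=e6, [e2,e4]=e6. -/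
def br (x y : V6) : V6 :=
  ![0, 0, 0, x 0 * y 1 - x 1 * y 0, x 0 * y 3 - x 3 * y 0,
    x 0 * y 4 - x 4 * y 0 + (x 1 * y 3 - x 3 * y 1)]

/-- The inner product making e1, ..., e6 orthonormal. -/
def ip (x y : V6) : ℝ := ∑ i, x i * y i

lemma ip_eq (x y : V6) : ip x y = x 0 * y 0 + x 1 * y 1 + x 2 * y 2 + x 3 * y 3
    + x 4 * y 4 + x 5 * y 5 := by
  simp [ip, Fin.sum_univ_six]

lemma br0 (x y : V6) : br x y 0 = 0 := rfl
lemma br1 (x y : V6) : br x y 1 = 0 := rfl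
lemma br2 (x y : V6) : br x y 2 = 0 := rfl
lemma br3 (x y : V6) : br x y 3 = x 0 * y 1 - x 1 * y 0 := rfl
lemma br4 (x y : V6) : br x y 4 = x 0 * y 3 - x 3 * y 0 := rfl
lemma br5 (x y : V6) : br x y 5 = x 0 * y 4 - x 4 * y 0 + (x 1 * y 3 - x 3 * y 1) := rfl

lemma vec0 : (![0, 0, 0, 0, 0, 0] : V6) = 0 := by
  funext i; fin_cases i <;> rfl

lemma br_zero_left (x : V6) (h0 : x 0 = 0) (h1 : x 1 = 0) (h3 : x 3 = 0) (h4 : x 4 = 0)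
    (y : V6) : br x y = 0 := by
  rw [← vec0]; simp [br, h0, h1, h3, h4]

lemma sym_of (Y : V6) (h0 : Y 0 = 0) (h1 : Y 1 = 0) (h3 : Y 3 = 0) (h4 : Y 4 = 0)
    (h5 : Y 5 = 0) :
    ∀ X Z : V6, ip (br X Y) Z + ip (br X Z) Y + ip (br Y Z) X = 0 := by
  intro X Z
  simp only [ip_eq, br0, br1, br2, br3, br4, br5, h0, h1, h3, h4, h5]
  ring

theorem h22_symmetry_std :
    (∀ X Z : V6, ip (br X (e 2)) Z + ip (br X Z) (e 2) + ip (br (e 2) Z) X = 0) ∧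
    (∀ Y : V6,
      (∀ X Z : V6, ip (br X Y) Z + ip (br X Z) Y + ip (br Y Z) X = 0) ↔
      Y ∈ span ℝ {e 2}) ∧
    {x : V6 | ∀ y, br x y = 0} = ((span ℝ {e 2, e 5} : Submodule ℝ V6) : Set V6) ∧
    (span ℝ {e 2} : Submodule ℝ V6) < span ℝ {e 2, e 5} := by
  have he2 : ∀ i : Fin 6, e 2 i = if i = 2 then 1 else 0 := by
    intro i; simp [e, Pi.single_apply]
  have he5 : ∀ i : Fin 6, e 5 i = if i = 5 then 1 else 0 := by
    intro i; simp [e, Pi.single_apply]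
  refine ⟨?_, ?_, ?_, ?_⟩
  · exact sym_of (e 2) (by simp [he2]) (by simp [he2]) (by simp [he2]) (by simp [he2])
      (by simp [he2])
  · intro Y
    constructor
    · intro h
      have h01 := h (e 0) (e 1)
      have h05 := h (e 0) (e 5)
      have h04 := h (e 0) (e 4)
      have h34 := h (e 3) (e 4)
      have h35 := h (e 3) (e 5)
      simp [ip_eq, br0, br1, br2, br3, br4, br5, e, Pi.single_apply] at h01 h05 h04 h34 h35
      rw [mem_span_singleton]
      refine ⟨Y 2, funext fun i => ?_⟩
      fin_cases i <;> simp [he2] <;> linarith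
    · intro hY
      rw [mem_span_singleton] at hY
      obtain ⟨c, rfl⟩ := hY
      exact sym_of _ (by simp [he2]) (by simp [he2]) (by simp [he2]) (by simp [he2])
        (by simp [he2])
  · ext x
    simp only [Set.mem_setOf_eq, SetLike.mem_coe, mem_span_pair]
    constructor
    · intro h
      have h1 := congrFun (h (e 0))
      have h2 := congrFun (h (e 1))
      have q3 := h1 3; have q4 := h1 4; have q5 := h1 5
      have p3 := h2 3; have p5 := h2 5
      rw [br3] at q3 p3; rw [br4] at q4; rw [br5] at q5 p5
      simp [e, Pi.single_apply] at q3 q4 q5 p3 p5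
      refine ⟨x 2, x 5, funext fun i => ?_⟩
      fin_cases i <;> simp [he2, he5] <;> linarith
    · rintro ⟨a, b, rfl⟩ y
      exact br_zero_left _ (by simp [he2, he5]) (by simp [he2, he5]) (by simp [he2, he5])
        (by simp [he2, he5]) y
  · constructor
    · exact span_mono (by intro x hx; simp_all)
    · intro hle
      have h5 : e 5 ∈ span ℝ ({e 2} : Set V6) := hle (subset_span (by simp))
      rw [mem_span_singleton] at h5
      obtain ⟨c, hc⟩ := h5
      have := congrFun hc 5
      simp [he2, he5] at this
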